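/- Let L be a finitely generated FAb group and R a normal subgroup of L such that the quotient D = L/R has no proper finite-index subgroups, and assume that for every finite-index normal subgroup L₂ of L, the commutator subgroup [L₂, R] has finite index in R. Then the fibre product Γ = L ×_D L (over the quotient map L → D) is FAb. -/

import Mathlib

/-- A group is FAb if every finite-index subgroup has finite abelianization. -/
def IsFAb (G : Type*) [Group G] : Prop :=
  ∀ Λ : Subgroup G, Λ.FiniteIndex → Finite (Abelianization Λ)

/-- The fibre product `L₁ ×_D L₂` of two surjective homomorphisms onto `D`,
as a subgroup of `L₁ × L₂`. -/
def fiberProduct {L₁ L₂ D : Type*} [Group L₁] [Group L₂] [Group D]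
    (ρ₁ : L₁ →* D) (ρ₂ : L₂ →* D) : Subgroup (L₁ × L₂) where
  carrier := {p : L₁ × L₂ | ρ₁ p.1 = ρ₂ p.2}
  one_mem' := by simp
  mul_mem' := by
    intro a b ha hb
    simp only [Set.mem_setOf_eq, Prod.fst_mul, Prod.snd_mul, map_mul] at *
    rw [ha, hb]
  inv_mem' := by
    intro a ha
    simp only [Set.mem_setOf_eq, Prod.fst_inv, Prod.snd_inv, map_inv] at *
    rw [ha]

/-!
Let `Λ` be a finite-index subgroup of `Γ = L ×_D L ⊆ L × L`, normal in `Γ`. It contains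
`(x, x)` for `x` in the finite-index subgroup `L₂ = {x | (x, x) ∈ Λ}` of `L`, and `(1, s)` for
`s` in `S = {s | (1, s) ∈ Λ} ≤ R`. Every `(x, y) ∈ Λ` with `x ∈ L₂` is `(x, x) (1, x⁻¹ y)`, so
these generate a finite-index subgroup of `Λ`, and it suffices that both have finite image in
`Λᵃᵇ`. For `L₂` this is the FAb property of `L`. For `S`, note that `(1, ⁅m, s⁆)` is the
commutator `⁅(a, m), (1, s)⁆` in `Λ` whenever `(a, m) ∈ Λ`, so it suffices that `⁅M, S⁆` has
finite index in `S`, where `M = {m | ∃ a, (a, m) ∈ Λ}`. Now `⁅M, R⁆ ≤ S` has finite index in `R`,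
and for `t ∈ R` the map `g ↦ ⁅g, t⁆` is a homomorphism from the FAb group `M` to the abelian
group `S / ⁅M, S⁆`. It depends only on `t S`, so finitely many such maps, each of finite image,
account for the whole image of `⁅M, R⁆` in `S / ⁅M, S⁆`.
-/

open Subgroup QuotientGroup
open scoped commutatorElement

section Finiteness

variable {G H : Type*} [Group G] [Group H]

lemma finite_abelianization_iff : Finite (Abelianization G) ↔ (commutator G).FiniteIndex :=
  finiteIndex_iff_finite_quotient.symm

lemma finite_range_of_finiteIndex_ker (f : G →* H) [hf : f.ker.FiniteIndex] : Finite f.range :=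
  Nat.finite_of_card_ne_zero (index_ker f ▸ hf.index_ne_zero)

lemma finite_range_of_commute [Finite (Abelianization G)] (f : G →* H)
    (hf : ∀ x y, Commute (f x) (f y)) : Finite f.range := by
  have : (commutator G).FiniteIndex := finite_abelianization_iff.mp ‹_›
  have hle : commutator G ≤ f.ker := by
    rw [commutator_def, commutator_le]
    intro x _ y _
    rw [MonoidHom.mem_ker, map_commutatorElement, commutatorElement_eq_one_iff_commute]
    exact hf x y
  have := finiteIndex_of_le hle
  exact finite_range_of_finiteIndex_ker f

lemma finite_iSup_of_commute {ι : Type*} [Finite ι] {K : ι → Subgroup G} [∀ i, Finite (K i)]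
    (hK : ∀ i j, ∀ x ∈ K i, ∀ y ∈ K j, Commute x y) : Finite ↥(⨆ i, K i) := by
  have := Fintype.ofFinite ι
  rw [← noncommPiCoprod_range (hcomm := fun i j _ x y hx hy => hK i j x hx y hy)]
  exact .of_surjective _ (MonoidHom.rangeRestrict_surjective _)

lemma finiteIndex_of_finite_map_mk {N K : Subgroup G} [N.Normal] [hK : K.FiniteIndex]
    (h : Finite (K.map (mk' N))) : N.FiniteIndex := by
  have hNK : N.relIndex K ≠ 0 := by
    rw [← ker_mk' N, relIndex_ker]
    exact Nat.card_pos.ne'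
  rw [finiteIndex_iff, ← relIndex_top_right]
  exact relIndex_ne_zero_trans hNK (relIndex_top_right K ▸ hK.index_ne_zero)

lemma finite_abelianization_of_sup {A B : Type*} [Group A] [Group B] (f : A →* G) (g : B →* G)
    [(f.range ⊔ g.range).FiniteIndex] [Finite (Abelianization.of.comp f).range]
    [Finite (Abelianization.of.comp g).range] : Finite (Abelianization G) := by
  rw [finite_abelianization_iff]
  refine finiteIndex_of_finite_map_mk (K := f.range ⊔ g.range) ?_
  change Finite ((f.range ⊔ g.range).map Abelianization.of)
  rw [Subgroup.map_sup, MonoidHom.map_range, MonoidHom.map_range, ← SetLike.coe_sort_coe,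
    mul_normal]
  exact ((Set.toFinite _).mul (Set.toFinite _)).to_subtype

lemma finite_abelianization_of_finiteIndex {K : Subgroup G} [hK : K.FiniteIndex]
    (h : Finite (Abelianization K)) : Finite (Abelianization G) := by
  rw [finite_abelianization_iff] at h ⊢
  have : ((commutator K).map K.subtype).FiniteIndex :=
    ⟨index_map_subtype (commutator K) ▸ mul_ne_zero h.index_ne_zero hK.index_ne_zero⟩
  exact finiteIndex_of_le
    ((map_commutator_eq K K.subtype).trans_le (commutator_mono le_top le_top))

lemma isFAb_of_forall_normal
    (h : ∀ Λ : Subgroup G, Λ.Normal → Λ.FiniteIndex → Finite (Abelianization Λ)) : IsFAb G := by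
  intro Λ hΛ
  have := h Λ.normalCore (normalCore_normal Λ) inferInstance
  exact finite_abelianization_of_finiteIndex (K := Λ.normalCore.subgroupOf Λ)
    (.of_equiv _ (subgroupOfEquivOfLe (normalCore_le Λ)).abelianizationCongr.symm.toEquiv)

lemma commutator_subgroupOf_self (K : Subgroup G) : ⁅K, K⁆.subgroupOf K = commutator K := by
  rw [subgroupOf, ← comap_map_eq_self_of_injective K.subtype_injective (commutator K),
    map_commutator_eq, range_subtype]

end Finiteness

section CommutatorHom

variable {G : Type*} [Group G] {M S R : Subgroup G} [M.Normal] [S.Normal]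

lemma commute_quotient_commutator (hSM : S ≤ M) (a b : S ⧸ ⁅M, S⁆.subgroupOf S) :
    Commute a b := by
  induction a using QuotientGroup.induction_on with | H x =>
  induction b using QuotientGroup.induction_on with | H y =>
  rw [← commutatorElement_eq_one_iff_commute]
  change ⁅mk' _ x, mk' _ y⁆ = 1
  rw [← map_commutatorElement, mk'_apply, eq_one_iff, mem_subgroupOf]
  exact commutator_mem_commutator (hSM x.2) y.2

/-- Modulo `⁅M, S⁆`, conjugation by `M` is trivial on `S`, so
`⁅g h, t⁆ = g ⁅h, t⁆ g⁻¹ ⁅g, t⁆ ≡ ⁅h, t⁆ ⁅g, t⁆`. -/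
def commutatorHom (hSM : S ≤ M) (hMR : ⁅M, R⁆ ≤ S) (t : R) :
    M →* S ⧸ ⁅M, S⁆.subgroupOf S :=
  MonoidHom.mk'
    (fun g => ((⟨⁅(g : G), t⁆, hMR (commutator_mem_commutator g.2 t.2)⟩ : S) : _))
    fun g h => by
      rw [(commute_quotient_commutator hSM _ _).eq, ← QuotientGroup.mk_mul, QuotientGroup.eq,
        mem_subgroupOf]
      set c := ⁅(h : G), (t : G)⁆
      set d := ⁅(g : G), (t : G)⁆
      have hc : c ∈ S := hMR (commutator_mem_commutator h.2 t.2)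
      convert (inferInstance : ⁅M, S⁆.Normal).conj_mem _
        (inv_mem (commutator_mem_commutator g.2 hc)) (c * d)⁻¹ using 1
      simp only [c, d, commutatorElement_def, coe_mul, coe_inv]
      group

lemma commutatorHom_eq_of_inv_mul_mem (hSM : S ≤ M) (hMR : ⁅M, R⁆ ≤ S) {t t' : R}
    (h : t⁻¹ * t' ∈ S.subgroupOf R) : commutatorHom hSM hMR t = commutatorHom hSM hMR t' := by
  ext g
  simp only [commutatorHom, MonoidHom.mk'_apply]
  rw [QuotientGroup.eq, mem_subgroupOf]
  convert (inferInstance : ⁅M, S⁆.Normal).conj_mem _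
    (commutator_mem_commutator g.2 (mem_subgroupOf.mp h)) t using 1
  simp only [commutatorElement_def, coe_mul, coe_inv]
  group

theorem finiteIndex_commutator_subgroupOf [Finite (Abelianization M)] (hSR : S ≤ R)
    (hSM : S ≤ M) (hMR : ⁅M, R⁆ ≤ S) [hfi : (⁅M, R⁆.subgroupOf R).FiniteIndex] :
    (⁅M, S⁆.subgroupOf S).FiniteIndex := by
  have hcomm := commute_quotient_commutator hSM
  have : (S.subgroupOf R).FiniteIndex :=
    finiteIndex_of_le (H := ⁅M, R⁆.subgroupOf R) (K := S.subgroupOf R) (comap_mono hMR)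
  set B := ⨆ i : R ⧸ S.subgroupOf R, (commutatorHom hSM hMR i.out).range
  have hB : Finite B := by
    have (i : R ⧸ S.subgroupOf R) : Finite (commutatorHom hSM hMR i.out).range :=
      finite_range_of_commute _ fun _ _ => hcomm _ _
    exact finite_iSup_of_commute fun _ _ x _ y _ => hcomm x y
  have hf_mem (t : R) (g : M) : commutatorHom hSM hMR t g ∈ B := by
    rw [commutatorHom_eq_of_inv_mul_mem hSM hMR
      (QuotientGroup.eq.mp (out_eq' (t : R ⧸ S.subgroupOf R)).symm)]
    exact mem_iSup_of_mem _ ⟨g, rfl⟩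
  have hMR_le : ⁅M, R⁆ ≤ (B.comap (mk' _)).map S.subtype :=
    commutator_le.mpr fun g hg t ht => ⟨_, hf_mem ⟨t, ht⟩ ⟨g, hg⟩, rfl⟩
  have : (⁅M, R⁆.subgroupOf S).FiniteIndex :=
    ⟨fun h => hfi.index_ne_zero (relIndex_eq_zero_of_le_right hSR h)⟩
  have hle : (⁅M, R⁆.subgroupOf S).map (mk' _) ≤ B := by
    rw [map_le_iff_le_comap, ← comap_map_eq_self_of_injective S.subtype_injective (B.comap _)]
    exact comap_mono hMR_le
  exact finiteIndex_of_finite_map_mk (Finite.of_injective _ (inclusion_injective hle))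

end CommutatorHom

abbrev MonoidHom.diag (L : Type*) [Group L] : L →* L × L :=
  (MonoidHom.id L).prod (MonoidHom.id L)

section FiberProduct

variable {L : Type*} [Group L] {R : Subgroup L} [R.Normal] {Λ : Subgroup (L × L)}

lemma mem_fiberProduct_mk' {p : L × L} :
    p ∈ fiberProduct (mk' R) (mk' R) ↔ p.1⁻¹ * p.2 ∈ R :=
  QuotientGroup.eq

lemma diag_mem_fiberProduct (g : L) : (g, g) ∈ fiberProduct (mk' R) (mk' R) :=
  mem_fiberProduct_mk'.mpr (by simp)

lemma commutatorElement_mk_one_right (a m r : L) :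
    ⁅(a, m), ((1 : L), r)⁆ = MonoidHom.inr L L ⁅m, r⁆ := by
  ext <;> simp [commutatorElement_def]

lemma conj_diag_mem (hnorm : fiberProduct (mk' R) (mk' R) ≤ normalizer (Λ : Set (L × L)))
    (g : L) {a b : L} (h : (a, b) ∈ Λ) : (g * a * g⁻¹, g * b * g⁻¹) ∈ Λ :=
  (mem_normalizer_iff.mp (hnorm (diag_mem_fiberProduct g)) _).mp h

lemma comap_inr_le (hΛ : Λ ≤ fiberProduct (mk' R) (mk' R)) : Λ.comap (MonoidHom.inr L L) ≤ R :=
  fun s hs => by simpa using mem_fiberProduct_mk'.mp (hΛ hs)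

lemma comap_inr_le_map_snd : Λ.comap (MonoidHom.inr L L) ≤ Λ.map (MonoidHom.snd L L) :=
  fun _ hs => ⟨_, hs, rfl⟩

lemma comap_diag_le_map_snd : Λ.comap (MonoidHom.diag L) ≤ Λ.map (MonoidHom.snd L L) :=
  fun _ hx => ⟨_, hx, rfl⟩

lemma normal_comap_inr
    (hnorm : fiberProduct (mk' R) (mk' R) ≤ normalizer (Λ : Set (L × L))) :
    (Λ.comap (MonoidHom.inr L L)).Normal :=
  ⟨fun s hs g => by simpa using conj_diag_mem hnorm g hs⟩

lemma normal_map_snd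
    (hnorm : fiberProduct (mk' R) (mk' R) ≤ normalizer (Λ : Set (L × L))) :
    (Λ.map (MonoidHom.snd L L)).Normal := by
  refine ⟨fun m hm g => ?_⟩
  obtain ⟨⟨a, m⟩, h, rfl⟩ := hm
  exact ⟨_, conj_diag_mem hnorm g h, rfl⟩

lemma commutator_map_snd_le
    (hnorm : fiberProduct (mk' R) (mk' R) ≤ normalizer (Λ : Set (L × L))) :
    ⁅Λ.map (MonoidHom.snd L L), R⁆ ≤ Λ.comap (MonoidHom.inr L L) := by
  rw [commutator_le]
  rintro _ ⟨⟨a, m⟩, h, rfl⟩ r hr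
  have hr' : ((1 : L), r) ∈ fiberProduct (mk' R) (mk' R) := mem_fiberProduct_mk'.mpr (by simpa)
  rw [mem_comap, ← commutatorElement_mk_one_right a]
  convert mul_mem h ((mem_normalizer_iff.mp (hnorm hr') _).mp (inv_mem h)) using 1
  simp [commutatorElement_def, mul_assoc]

lemma finiteIndex_comap_diag (hfi : Λ.relIndex (fiberProduct (mk' R) (mk' R)) ≠ 0) :
    (Λ.comap (MonoidHom.diag L)).FiniteIndex := by
  refine ⟨fun h => hfi (relIndex_eq_zero_of_le_right ?_ (by rwa [index_comap] at h))⟩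
  rintro _ ⟨g, rfl⟩
  exact diag_mem_fiberProduct g

lemma finiteIndex_range_sup_range [(Λ.comap (MonoidHom.diag L)).FiniteIndex] :
    (((MonoidHom.diag L).subgroupComap Λ).range ⊔
      ((MonoidHom.inr L L).subgroupComap Λ).range).FiniteIndex := by
  refine finiteIndex_of_le (H := ((Λ.comap (MonoidHom.diag L)).prod ⊤).subgroupOf Λ) ?_
  rintro ⟨⟨x, y⟩, hxy⟩ hx
  have hx : (x, x) ∈ Λ := (mem_prod.mp (mem_subgroupOf.mp hx)).1
  have hy : ((1 : L), x⁻¹ * y) ∈ Λ := by simpa using mul_mem (inv_mem hx) hxy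
  have hdecomp : (⟨(x, y), hxy⟩ : Λ) =
      (MonoidHom.diag L).subgroupComap Λ ⟨x, hx⟩ *
        (MonoidHom.inr L L).subgroupComap Λ ⟨x⁻¹ * y, hy⟩ :=
    Subtype.ext (Prod.ext (mul_one x).symm (mul_inv_cancel_left x y).symm)
  rw [hdecomp]
  exact mul_mem_sup ⟨_, rfl⟩ ⟨_, rfl⟩

lemma commutator_map_snd_comap_inr_le :
    ⁅Λ.map (MonoidHom.snd L L), Λ.comap (MonoidHom.inr L L)⁆ ≤
      ⁅Λ, Λ⁆.comap (MonoidHom.inr L L) := by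
  rw [commutator_le]
  rintro _ ⟨⟨a, m⟩, h, rfl⟩ s hs
  rw [mem_comap, ← commutatorElement_mk_one_right a]
  exact commutator_mem_commutator h hs

lemma finite_range_abelianization_inr
    [(⁅Λ.map (MonoidHom.snd L L), Λ.comap (MonoidHom.inr L L)⁆.subgroupOf
      (Λ.comap (MonoidHom.inr L L))).FiniteIndex] :
    Finite (Abelianization.of.comp ((MonoidHom.inr L L).subgroupComap Λ)).range := by
  have hle : ⁅Λ.map (MonoidHom.snd L L), Λ.comap (MonoidHom.inr L L)⁆.subgroupOf
      (Λ.comap (MonoidHom.inr L L)) ≤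
        (Abelianization.of.comp ((MonoidHom.inr L L).subgroupComap Λ)).ker := by
    intro s hs
    rw [MonoidHom.mem_ker, MonoidHom.comp_apply, ← MonoidHom.mem_ker, Abelianization.ker_of,
      ← commutator_subgroupOf_self, mem_subgroupOf]
    exact commutator_map_snd_comap_inr_le (mem_subgroupOf.mp hs)
  have := finiteIndex_of_le hle
  exact finite_range_of_finiteIndex_ker _

theorem finite_abelianization_of_le_fiberProduct (hFAb : IsFAb L)
    (hmax : ∀ L₂ : Subgroup L, L₂.Normal → L₂.FiniteIndex →
      (⁅L₂, R⁆.subgroupOf R).FiniteIndex)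
    (hΛ : Λ ≤ fiberProduct (mk' R) (mk' R))
    (hnorm : fiberProduct (mk' R) (mk' R) ≤ normalizer (Λ : Set (L × L)))
    (hfi : Λ.relIndex (fiberProduct (mk' R) (mk' R)) ≠ 0) : Finite (Abelianization Λ) := by
  have hL₂ := finiteIndex_comap_diag hfi
  have := hFAb _ hL₂
  have : Finite (Abelianization.of.comp ((MonoidHom.diag L).subgroupComap Λ)).range :=
    finite_range_of_commute _ fun _ _ => Commute.all _ _
  have := normal_comap_inr hnorm
  have hMn := normal_map_snd hnorm
  have hM : (Λ.map (MonoidHom.snd L L)).FiniteIndex := finiteIndex_of_le comap_diag_le_map_snd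
  have := hFAb _ hM
  have := hmax _ hMn hM
  have := finiteIndex_commutator_subgroupOf (comap_inr_le hΛ) comap_inr_le_map_snd
    (commutator_map_snd_le hnorm)
  have := finite_range_abelianization_inr (Λ := Λ)
  have := finiteIndex_range_sup_range (Λ := Λ)
  exact finite_abelianization_of_sup ((MonoidHom.diag L).subgroupComap Λ)
    ((MonoidHom.inr L L).subgroupComap Λ)

end FiberProduct

theorem isFAb_fiberProduct_of_commutator_finiteIndex_general
    {L : Type*} [Group L] (hFAb : IsFAb L)
    (R : Subgroup L) [R.Normal]
    (hmax : ∀ L₂ : Subgroup L, L₂.Normal → L₂.FiniteIndex →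
      (⁅L₂, R⁆.subgroupOf R).FiniteIndex) :
    IsFAb (fiberProduct (QuotientGroup.mk' R) (QuotientGroup.mk' R)) := by
  set Γ := fiberProduct (QuotientGroup.mk' R) (QuotientGroup.mk' R)
  refine isFAb_of_forall_normal fun Λ _ hΛfi => ?_
  have hnorm : Γ ≤ normalizer (Λ.map Γ.subtype : Set (L × L)) := by
    have := le_normalizer_map (H := Λ) Γ.subtype
    rwa [normalizer_eq_top, ← MonoidHom.range_eq_map, range_subtype] at this
  have hfi : (Λ.map Γ.subtype).relIndex Γ ≠ 0 := by
    rw [relIndex, subgroupOf, comap_map_eq_self_of_injective Γ.subtype_injective]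
    exact hΛfi.index_ne_zero
  have := finite_abelianization_of_le_fiberProduct hFAb hmax (map_subtype_le Λ) hnorm hfi
  exact .of_equiv _ (Λ.equivMapOfInjective _ Γ.subtype_injective).abelianizationCongr.symm.toEquiv

/-- Let `L` be a finitely generated FAb group and `R` a normal subgroup such
that `D = L/R` has no proper finite-index subgroups, and suppose `[L₂, R]`
has finite index in `R` for every finite-index normal subgroup `L₂` of `L`.
Then the fibre product `Γ = L ×_D L` over the quotient map is FAb. -/
theorem isFAb_fiberProduct_of_commutator_finiteIndex
    {L : Type*} [Group L] (hfg : Group.FG L) (hFAb : IsFAb L)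
    (R : Subgroup L) [R.Normal]
    (hD : ∀ H : Subgroup (L ⧸ R), H.FiniteIndex → H = ⊤)
    (hmax : ∀ L₂ : Subgroup L, L₂.Normal → L₂.FiniteIndex →
      (⁅L₂, R⁆.subgroupOf R).FiniteIndex) :
    IsFAb (fiberProduct (QuotientGroup.mk' R) (QuotientGroup.mk' R)) :=
  isFAb_fiberProduct_of_commutator_finiteIndex_general hFAb R hmax
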